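/- (Example 4.9, cohomology, ring presentation) The ring P_H(x) of integral piecewise polynomials on Σ_{(1,1,2)} is generated as a ring by the global linear functions X_1 = (x_1,x_1,x_1) and X_2 = (x_2,x_2,x_2) together with p = (0, 2x_1, x_2) and q = (0, x_1(2x_1 − x_2), 0); precisely, the ℤ-algebra homomorphism from the polynomial ring ℤ[X_1,X_2,P,Q] to P_H(x) sending X_1 ↦ (x_1,x_1,x_1), X_2 ↦ (x_2,x_2,x_2), P ↦ p, Q ↦ q is surjective with kernel the ideal I_1 = ( P(P − X_2) − 2Q, Q(P − 2X_1), Q(Q − X_1(2X_1 − X_2)) ), so P_H(x) ≅ ℤ[X_1,X_2,P,Q]/I_1. -/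

import Mathlib

open MvPolynomial

noncomputable section

/-- The ring of integral piecewise polynomials on the fan `Σ_{(1,1,2)}` of `ℙ(1,1,2)`,
as a subring of `ℤ[x₁,x₂]³`: triples `(f₀, f₁, f₂)` (component `fᵢ` attached to the
maximal cone `σᵢ`) with `x₁ ∣ f₀ − f₁`, `x₂ ∣ f₀ − f₂` and `(2x₁ − x₂) ∣ f₁ − f₂`.
Here `x₁ = X 0` and `x₂ = X 1` in `MvPolynomial (Fin 2) ℤ`. -/
def PH112 : Subring (Fin 3 → MvPolynomial (Fin 2) ℤ) where
  carrier := {f | X 0 ∣ f 0 - f 1 ∧ X 1 ∣ f 0 - f 2 ∧ (2 * X 0 - X 1) ∣ f 1 - f 2}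
  zero_mem' := by refine ⟨?_, ?_, ?_⟩ <;> simp
  one_mem' := by refine ⟨?_, ?_, ?_⟩ <;> simp
  add_mem' := by
    rintro a b ⟨ha1, ha2, ha3⟩ ⟨hb1, hb2, hb3⟩
    refine ⟨?_, ?_, ?_⟩
    · have := dvd_add ha1 hb1
      simpa [add_sub_add_comm] using this
    · have := dvd_add ha2 hb2
      simpa [add_sub_add_comm] using this
    · have := dvd_add ha3 hb3
      simpa [add_sub_add_comm] using this
  neg_mem' := by
    rintro a ⟨h1, h2, h3⟩
    exact ⟨by simpa [neg_sub_neg, ← sub_eq_neg_add] using h1.neg_right,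
      by simpa [neg_sub_neg, ← sub_eq_neg_add] using h2.neg_right,
      by simpa [neg_sub_neg, ← sub_eq_neg_add] using h3.neg_right⟩
  mul_mem' := by
    rintro a b ⟨ha1, ha2, ha3⟩ ⟨hb1, hb2, hb3⟩
    have key : ∀ (i j : Fin 3) (d : MvPolynomial (Fin 2) ℤ),
        d ∣ a i - a j → d ∣ b i - b j → d ∣ a i * b i - a j * b j := by
      intro i j d h1 h2
      have e : a i * b i - a j * b j = (a i - a j) * b i + a j * (b i - b j) := by ring
      rw [e]
      exact dvd_add (h1.mul_right _) (h2.mul_left _)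
    exact ⟨key 0 1 _ ha1 hb1, key 0 2 _ ha2 hb2, key 1 2 _ ha3 hb3⟩

/-- The piecewise polynomial `p = (0, 2x₁, x₂)`. -/
def pElt : Fin 3 → MvPolynomial (Fin 2) ℤ := ![0, 2 * X 0, X 1]

/-- The piecewise polynomial `q = (0, x₁(2x₁ − x₂), 0)`. -/
def qElt : Fin 3 → MvPolynomial (Fin 2) ℤ := ![0, X 0 * (2 * X 0 - X 1), 0]

/-! Over `ℤ[x₁,x₂]`, `P_H` is free on `1, p, q`: for `f ∈ P_H` write `f₂ − f₀ = a x₂`; then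
`f₁ − f₀ − 2a x₁` is divisible by `x₁` and by `2x₁ − x₂`, hence (as `x₁` is prime and does not
divide `2x₁ − x₂`) by their product `q₁`. Dually, the three relations rewrite `P²`, `PQ` and `Q²`
as combinations of `1, P, Q` over `ℤ[X₁,X₂]`, so every polynomial is congruent modulo `I₁` to some
`c + aP + bQ`, and such an element maps to `0` only if `c = a = b = 0`. -/

namespace PH112

local notation "R₂" => MvPolynomial (Fin 2) ℤ
local notation "R₄" => MvPolynomial (Fin 4) ℤ

lemma X_zero_mul_two_X_zero_sub_X_one_dvd {g : R₂} (h₀ : X 0 ∣ g) (h₁ : 2 * X 0 - X 1 ∣ g) :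
    X 0 * (2 * X 0 - X 1) ∣ g := by
  have hX : Prime (X 0 : R₂) := X_prime
  have hndvd : ¬ (X 0 : R₂) ∣ 2 * X 0 - X 1 := fun h ↦ by
    have : (X 0 : R₂) ∣ X 1 := by simpa using (dvd_mul_left (X 0) 2).sub h
    exact absurd (X_dvd_X.mp this) (by decide)
  exact (hX.irreducible.isRelPrime_iff_not_dvd.mpr hndvd).mul_dvd_of_left_isPrimal h₀ h₁
    hX.isPrimal

lemma exists_eq_add_mul_pElt_add_mul_qElt {f : Fin 3 → R₂} (hf : f ∈ PH112) :
    ∃ a b : R₂, ∀ i, f i = f 0 + a * pElt i + b * qElt i := by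
  obtain ⟨h₀₁, h₀₂, h₁₂⟩ := hf
  obtain ⟨a, ha⟩ : X 1 ∣ f 2 - f 0 := dvd_sub_comm.mp h₀₂
  have h₀ : X 0 ∣ f 1 - f 0 - 2 * X 0 * a := (dvd_sub_comm.mp h₀₁).sub ⟨2 * a, by ring⟩
  have h₁ : 2 * X 0 - X 1 ∣ f 1 - f 0 - 2 * X 0 * a := by
    have e : f 1 - f 0 - 2 * X 0 * a = (f 1 - f 2) - (2 * X 0 - X 1) * a := by
      linear_combination ha
    exact e ▸ h₁₂.sub (dvd_mul_right _ _)
  obtain ⟨b, hb⟩ := X_zero_mul_two_X_zero_sub_X_one_dvd h₀ h₁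
  refine ⟨a, b, fun i ↦ ?_⟩
  fin_cases i
  · simp [pElt, qElt]
  · simp [pElt, qElt]; linear_combination hb
  · simp [pElt, qElt]; linear_combination ha

lemma eq_zero_of_add_mul_pElt_add_mul_qElt_eq_zero {c a b : R₂}
    (h : ∀ i, c + a * pElt i + b * qElt i = 0) : c = 0 ∧ a = 0 ∧ b = 0 := by
  have hq : (2 * X 0 - X 1 : R₂) ≠ 0 := fun h ↦ by simpa using congrArg (eval ![1, 0]) h
  have hc : c = 0 := by simpa [pElt, qElt] using h 0
  have ha : a = 0 := by simpa [pElt, qElt, hc, X_ne_zero] using h 2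
  have hb : b = 0 := by simpa [pElt, qElt, hc, ha, X_ne_zero, hq] using h 1
  exact ⟨hc, ha, hb⟩

/-- The component on the cone `σᵢ` of the image of a polynomial in `X₁, X₂, P, Q`. -/
def coneEval (i : Fin 3) : R₄ →ₐ[ℤ] R₂ := aeval ![X 0, X 1, pElt i, qElt i]

def coneEvals : R₄ →+* (Fin 3 → R₂) := RingHom.pi fun i ↦ (coneEval i).toRingHom

@[simp]
lemma coneEvals_apply (F : R₄) (i : Fin 3) : coneEvals F i = coneEval i F := rfl

@[simp]
lemma coneEval_X (i : Fin 3) (n : Fin 4) :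
    coneEval i (X n) = ![X 0, X 1, pElt i, qElt i] n :=
  aeval_X _ _

lemma coneEvals_X_mem (n : Fin 4) : coneEvals (X n) ∈ PH112 := by
  fin_cases n <;> exact ⟨by simp [pElt, qElt], by simp [pElt, qElt], by simp [pElt, qElt]⟩

lemma coneEvals_mem (F : R₄) : coneEvals F ∈ PH112 := by
  induction F using MvPolynomial.induction_on with
  | C n => simp
  | add F G hF hG => simpa using add_mem hF hG
  | mul_X F n hF => simpa using mul_mem hF (coneEvals_X_mem n)

def presentationHom : R₄ →+* PH112 := coneEvals.codRestrict PH112 coneEvals_mem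

lemma coe_presentationHom (F : R₄) : (presentationHom F : Fin 3 → R₂) = coneEvals F := rfl

lemma coe_presentationHom_X (n : Fin 4) :
    (presentationHom (X n) : Fin 3 → R₂) = fun i ↦ ![X 0, X 1, pElt i, qElt i] n := by
  funext i
  simp [coe_presentationHom]

def baseIncl : R₂ →ₐ[ℤ] R₄ := rename ![0, 1]

@[simp]
lemma baseIncl_X_zero : baseIncl (X 0) = X 0 := rename_X _ _

@[simp]
lemma baseIncl_X_one : baseIncl (X 1) = X 1 := rename_X _ _

lemma coneEval_baseIncl (i : Fin 3) (c : R₂) : coneEval i (baseIncl c) = c := by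
  rw [baseIncl, coneEval, aeval_rename]
  convert aeval_X_left_apply c
  ext k
  fin_cases k <;> rfl

def normalForm (c a b : R₂) : R₄ := baseIncl c + baseIncl a * X 2 + baseIncl b * X 3

lemma coe_presentationHom_normalForm_apply (c a b : R₂) (i : Fin 3) :
    (presentationHom (normalForm c a b) : Fin 3 → R₂) i = c + a * pElt i + b * qElt i := by
  simp [normalForm, coe_presentationHom, coneEval_baseIncl]

def relations : Ideal R₄ :=
  Ideal.span
    {X 2 * (X 2 - X 1) - 2 * X 3,
     X 3 * (X 2 - 2 * X 0),
     X 3 * (X 3 - X 0 * (2 * X 0 - X 1))}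

lemma relations_le_ker : relations ≤ RingHom.ker presentationHom := by
  rw [relations, Ideal.span_le]
  rintro r (rfl | rfl | rfl) <;>
  · rw [SetLike.mem_coe, RingHom.mem_ker, ← Subtype.coe_inj, coe_presentationHom]
    funext i
    fin_cases i <;> simp [pElt, qElt, map_ofNat] <;> ring

lemma exists_mk_eq_mk_normalForm (F : R₄) :
    ∃ c a b : R₂, Ideal.Quotient.mk relations F = Ideal.Quotient.mk relations (normalForm c a b) := by
  set π := Ideal.Quotient.mk relations
  have relP : π (X 2 * (X 2 - X 1) - 2 * X 3) = 0 :=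
    Ideal.Quotient.eq_zero_iff_mem.mpr (Ideal.subset_span (by simp))
  have relPQ : π (X 3 * (X 2 - 2 * X 0)) = 0 :=
    Ideal.Quotient.eq_zero_iff_mem.mpr (Ideal.subset_span (by simp))
  have relQ : π (X 3 * (X 3 - X 0 * (2 * X 0 - X 1))) = 0 :=
    Ideal.Quotient.eq_zero_iff_mem.mpr (Ideal.subset_span (by simp))
  simp only [map_sub, map_mul, map_ofNat] at relP relPQ relQ
  induction F using MvPolynomial.induction_on with
  | C n => exact ⟨C n, 0, 0, by simp [normalForm, baseIncl]⟩
  | add F G hF hG =>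
    obtain ⟨c, a, b, hF⟩ := hF
    obtain ⟨c', a', b', hG⟩ := hG
    refine ⟨c + c', a + a', b + b', ?_⟩
    simp only [normalForm, map_add, map_mul] at hF hG ⊢
    rw [hF, hG]
    ring
  | mul_X F n hF =>
    obtain ⟨c, a, b, hF⟩ := hF
    rw [map_mul, hF]
    fin_cases n
    · exact ⟨c * X 0, a * X 0, b * X 0, by simp [normalForm]; ring⟩
    · exact ⟨c * X 1, a * X 1, b * X 1, by simp [normalForm]; ring⟩
    · refine ⟨0, c + a * X 1, 2 * a + 2 * X 0 * b, ?_⟩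
      simp [normalForm, map_ofNat]
      linear_combination π (baseIncl a) * relP + π (baseIncl b) * relPQ
    · refine ⟨0, 0, c + 2 * X 0 * a + X 0 * (2 * X 0 - X 1) * b, ?_⟩
      simp [normalForm, map_ofNat]
      linear_combination π (baseIncl a) * relPQ + π (baseIncl b) * relQ

end PH112

/-- **Example 4.9, cohomology, ring presentation.**
`P_H(x)` for `Σ_{(1,1,2)}` is generated as a ring by the global linear functions
`X₁ = (x₁,x₁,x₁)`, `X₂ = (x₂,x₂,x₂)` together with `p` and `q`: the ring homomorphism
from `ℤ[X₁,X₂,P,Q]` (realised as `MvPolynomial (Fin 4) ℤ` with `X 0 ↦ X₁`, `X 1 ↦ X₂`,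
`X 2 ↦ P`, `X 3 ↦ Q`) to `P_H(x)` sending `X₁, X₂` to the diagonal elements and
`P ↦ p`, `Q ↦ q` is surjective with kernel the ideal
`I₁ = (P(P−X₂) − 2Q, Q(P−2X₁), Q(Q − X₁(2X₁−X₂)))`, so `P_H(x) ≅ ℤ[X₁,X₂,P,Q]/I₁`. -/
theorem PH112_presentation :
    ∃ φ : MvPolynomial (Fin 4) ℤ →+* PH112,
      ((φ (X 0) : Fin 3 → MvPolynomial (Fin 2) ℤ) = fun _ => X 0) ∧
      ((φ (X 1) : Fin 3 → MvPolynomial (Fin 2) ℤ) = fun _ => X 1) ∧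
      ((φ (X 2) : Fin 3 → MvPolynomial (Fin 2) ℤ) = pElt) ∧
      ((φ (X 3) : Fin 3 → MvPolynomial (Fin 2) ℤ) = qElt) ∧
      Function.Surjective φ ∧
      RingHom.ker φ = Ideal.span
        {X 2 * (X 2 - X 1) - 2 * X 3,
         X 3 * (X 2 - 2 * X 0),
         X 3 * (X 3 - X 0 * (2 * X 0 - X 1))} := by
  open PH112 in
  refine ⟨presentationHom, coe_presentationHom_X 0, coe_presentationHom_X 1,
    coe_presentationHom_X 2, coe_presentationHom_X 3, ?_, ?_⟩
  · rintro ⟨f, hf⟩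
    obtain ⟨a, b, hab⟩ := exists_eq_add_mul_pElt_add_mul_qElt hf
    refine ⟨normalForm (f 0) a b, Subtype.ext (funext fun i ↦ ?_)⟩
    rw [coe_presentationHom_normalForm_apply]
    exact (hab i).symm
  · change RingHom.ker presentationHom = relations
    refine le_antisymm (fun F hF ↦ ?_) relations_le_ker
    obtain ⟨c, a, b, hcab⟩ := exists_mk_eq_mk_normalForm F
    have hker : presentationHom (normalForm c a b) = 0 := by
      have := relations_le_ker (Ideal.Quotient.eq.mp hcab)
      rwa [RingHom.mem_ker, map_sub, RingHom.mem_ker.mp hF, zero_sub, neg_eq_zero] at this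
    obtain ⟨rfl, rfl, rfl⟩ := eq_zero_of_add_mul_pElt_add_mul_qElt_eq_zero fun i ↦ by
      rw [← coe_presentationHom_normalForm_apply, hker]
      rfl
    simpa [normalForm, Ideal.Quotient.eq_zero_iff_mem] using hcab
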